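/- Exponential-weights second-order inequality: for learning rate η ∈ (0, 1/2), nonnegative loss vectors ℓ̂_1,…,ℓ̂_T on labels {0,1} with ℓ̂_t(y) ≤ 1/η, weights updated multiplicatively q_{t+1}^i ∝ q_t^i · exp(−η ℓ̂_t(E_t^i)) over N experts starting from uniform, and prediction probabilities p_t^1 = (1−η)Σ_i q_t^i E_t^i + η, p_t^0 = 1 − p_t^1, we have for every expert j: Σ_t Σ_{y∈{0,1}} p_t^y ℓ̂_t(y) − Σ_t ℓ̂_t(E_t^j) ≤ (ln N)/η + η Σ_t ℓ̂_t(1) + η Σ_t p_t^1(1−p_t^1) ℓ̂_t(0)² + η Σ_t p_t^1 ℓ̂_t(1)². -/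
import Mathlib


open Finset

private theorem coreIneq (η r l0 l1 : ℝ) (hη0 : 0 < η) (hη2 : 2*η ≤ 1) (hr0 : 0 ≤ r) (hr1 : r ≤ 1)
    (h00 : 0 ≤ l0) (h10 : 0 ≤ l1) (h0b : η*l0 ≤ 1) (h1b : η*l1 ≤ 1) :
    (r*(1-((1-η)*r+η))^2+(1-r)*((1-η)*r+η)^2)*(l1-l0)^2 ≤
      r*l1 + (1-r)*l0 + ((1-η)*r+η)*(1-((1-η)*r+η))*l0^2 + ((1-η)*r+η)*l1^2 := by
  set p := (1-η)*r+η with hp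
  have hp0 : 0 ≤ p := by nlinarith
  have hp1 : p ≤ 1 := by nlinarith
  have hrp : r ≤ p := by nlinarith
  have hA0 : 0 ≤ r*(1-p)^2+(1-r)*p^2 :=
    add_nonneg (mul_nonneg hr0 (sq_nonneg _)) (mul_nonneg (by linarith) (sq_nonneg _))
  have hAp : r*(1-p)^2+(1-r)*p^2 ≤ p := by
    nlinarith [mul_le_mul_of_nonneg_right hrp (sq_nonneg (1-p)), sq_nonneg p,
      mul_nonneg hr0 (sq_nonneg p), sq_nonneg (1-p)]
  have hA2 : r*(1-p)^2+(1-r)*p^2 ≤ p*(1-p) + η*(1-r) := by nlinarith [sq_nonneg (r*(1-η))]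
  rcases le_or_gt l0 l1 with h | h
  · have h1 : (l1-l0)^2 ≤ l1^2 := by nlinarith
    nlinarith [mul_nonneg (mul_nonneg (mul_nonneg hp0 (by linarith : (0:ℝ) ≤ 1-p)) h00) h00,
      mul_nonneg hr0 h10, mul_nonneg (by linarith : (0:ℝ) ≤ 1-r) h00,
      mul_le_mul hAp h1 (sq_nonneg _) hp0]
  · have h1 : (l1-l0)^2 ≤ l0^2 := by nlinarith
    have key : (r*(1-p)^2+(1-r)*p^2)*l0^2 ≤ (p*(1-p) + η*(1-r))*l0^2 :=
      mul_le_mul_of_nonneg_right hA2 (sq_nonneg _)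
    have key2 : η*(1-r)*l0^2 ≤ (1-r)*l0 := by
      nlinarith [mul_nonneg (mul_nonneg (by linarith : (0:ℝ) ≤ 1-r) h00) h00]
    nlinarith [mul_nonneg hr0 h10, mul_nonneg hp0 (sq_nonneg l1),
      mul_le_mul_of_nonneg_left h1 hA0]

private theorem exp_le_quad {x : ℝ} (hx : |x| ≤ 1) : Real.exp x ≤ 1 + x + x^2 := by
  have h := Real.exp_bound hx (by norm_num : 0 < 2)
  have h2 : |Real.exp x - (1 + x)| ≤ |x|^2 * (3 / (2*2)) := by
    simpa [Finset.sum_range_succ] using h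
  have hx2 : |x|^2 = x^2 := sq_abs x
  rw [abs_le] at h2
  nlinarith [sq_nonneg x]

/-- Per-round scalar bound. -/
private theorem roundBound (η r l0 l1 : ℝ) (hη0 : 0 < η) (hη2 : 2*η ≤ 1)
    (hr0 : 0 ≤ r) (hr1 : r ≤ 1) (h00 : 0 ≤ l0) (h10 : 0 ≤ l1)
    (h0b : η*l0 ≤ 1) (h1b : η*l1 ≤ 1) :
    r * Real.exp (-η*l1) + (1-r) * Real.exp (-η*l0) ≤
      Real.exp (-η*(((1-η)*r+η)*l1 + (1-((1-η)*r+η))*l0)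
        + η^2*(l1 + ((1-η)*r+η)*(1-((1-η)*r+η))*l0^2 + ((1-η)*r+η)*l1^2)) := by
  set p := (1-η)*r+η with hp
  have hp0 : 0 ≤ p := by nlinarith
  have hp1 : p ≤ 1 := by nlinarith
  set m := p*l1 + (1-p)*l0 with hm
  have hm0 : 0 ≤ m := add_nonneg (mul_nonneg hp0 h10) (mul_nonneg (by linarith) h00)
  have hmb : η*m ≤ 1 := by
    have h1 : η*(p*l1) ≤ p := by nlinarith [mul_le_mul_of_nonneg_left h1b hp0]
    have h2 : η*((1-p)*l0) ≤ 1-p := by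
      nlinarith [mul_le_mul_of_nonneg_left h0b (by linarith : (0:ℝ) ≤ 1-p)]
    nlinarith
  have hx1 : |η*(m-l1)| ≤ 1 := by
    rw [abs_le]
    constructor
    · nlinarith [mul_nonneg hη0.le hm0]
    · nlinarith [mul_nonneg hη0.le h10]
  have hx0 : |η*(m-l0)| ≤ 1 := by
    rw [abs_le]
    constructor
    · nlinarith [mul_nonneg hη0.le hm0]
    · nlinarith [mul_nonneg hη0.le h00]
  have hb1 := exp_le_quad hx1
  have hb0 := exp_le_quad hx0
  have e1 : Real.exp (-η*l1) = Real.exp (-η*m) * Real.exp (η*(m-l1)) := by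
    rw [← Real.exp_add]; ring_nf
  have e0 : Real.exp (-η*l0) = Real.exp (-η*m) * Real.exp (η*(m-l0)) := by
    rw [← Real.exp_add]; ring_nf
  have hS : r*(1 + η*(m-l1) + (η*(m-l1))^2) + (1-r)*(1 + η*(m-l0) + (η*(m-l0))^2)
      ≤ 1 + η^2*(l1 + p*(1-p)*l0^2 + p*l1^2) := by
    have hcore := coreIneq η r l0 l1 hη0 hη2 hr0 hr1 h00 h10 h0b h1b
    rw [← hp] at hcore
    have hiden : r*(1 + η*(m-l1) + (η*(m-l1))^2) + (1-r)*(1 + η*(m-l0) + (η*(m-l0))^2)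
        = 1 + η^2*(l1 - (r*l1+(1-r)*l0)
            + (r*(1-p)^2+(1-r)*p^2)*(l1-l0)^2) := by
      rw [hm]; ring
    rw [hiden]
    nlinarith [mul_le_mul_of_nonneg_left hcore (sq_nonneg η)]
  have hE : 1 + η^2*(l1 + p*(1-p)*l0^2 + p*l1^2)
      ≤ Real.exp (η^2*(l1 + p*(1-p)*l0^2 + p*l1^2)) := by
    have := Real.add_one_le_exp (η^2*(l1 + p*(1-p)*l0^2 + p*l1^2))
    linarith
  calc r * Real.exp (-η*l1) + (1-r) * Real.exp (-η*l0)
      = Real.exp (-η*m) * (r * Real.exp (η*(m-l1)) + (1-r) * Real.exp (η*(m-l0))) := by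
        rw [e1, e0]; ring
    _ ≤ Real.exp (-η*m) * (1 + η^2*(l1 + p*(1-p)*l0^2 + p*l1^2)) := by
        apply mul_le_mul_of_nonneg_left _ (Real.exp_pos _).le
        calc r * Real.exp (η*(m-l1)) + (1-r) * Real.exp (η*(m-l0))
            ≤ r*(1 + η*(m-l1) + (η*(m-l1))^2) + (1-r)*(1 + η*(m-l0) + (η*(m-l0))^2) :=
              add_le_add (mul_le_mul_of_nonneg_left hb1 hr0)
                (mul_le_mul_of_nonneg_left hb0 (by linarith))
          _ ≤ _ := hS
    _ ≤ Real.exp (-η*m) * Real.exp (η^2*(l1 + p*(1-p)*l0^2 + p*l1^2)) :=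
        mul_le_mul_of_nonneg_left hE (Real.exp_pos _).le
    _ = Real.exp (-η*m + η^2*(l1 + p*(1-p)*l0^2 + p*l1^2)) := (Real.exp_add _ _).symm

/-- Exponential weights over N experts: uniform initial weights, multiplicative update
q_{t+1}^i ∝ q_t^i · exp(-η ℓ_t(E_t^i)), where expert i advises E t i ∈ {0,1} at round t
and ℓ t y is the loss of label y at round t. -/
noncomputable def expWeights (N : ℕ) (η : ℝ) (E : ℕ → Fin N → Bool) (ℓ : ℕ → Bool → ℝ) :
    ℕ → Fin N → ℝ
  | 0 => fun _ => 1 / N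
  | t + 1 => fun i =>
      expWeights N η E ℓ t i * Real.exp (-η * ℓ t (E t i)) /
        ∑ j, expWeights N η E ℓ t j * Real.exp (-η * ℓ t (E t j))

/-- The probability of predicting 1: p_t^1 = (1-η) Σ_i q_t^i E_t^i + η. -/
noncomputable def probOne (N : ℕ) (η : ℝ) (E : ℕ → Fin N → Bool) (ℓ : ℕ → Bool → ℝ)
    (t : ℕ) : ℝ :=
  (1 - η) * (∑ i, expWeights N η E ℓ t i * (if E t i then (1 : ℝ) else 0)) + η

section Weights
variable (N : ℕ) (η : ℝ) (E : ℕ → Fin N → Bool) (ℓ : ℕ → Bool → ℝ) (hN : 1 ≤ N)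

private theorem weights_pos (hN : 1 ≤ N) : ∀ t i, 0 < expWeights N η E ℓ t i := by
  intro t
  induction t with
  | zero =>
    intro i
    simp only [expWeights]
    positivity
  | succ t ih =>
    intro i
    have hZ : 0 < ∑ j, expWeights N η E ℓ t j * Real.exp (-η * ℓ t (E t j)) := by
      apply Finset.sum_pos
      · intro j _
        exact mul_pos (ih j) (Real.exp_pos _)
      · haveI : Nonempty (Fin N) := Fin.pos_iff_nonempty.mp hN
        exact Finset.univ_nonempty
    simp only [expWeights]
    exact div_pos (mul_pos (ih i) (Real.exp_pos _)) hZ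

private theorem weights_sum_one (hN : 1 ≤ N) : ∀ t, ∑ i, expWeights N η E ℓ t i = 1 := by
  intro t
  cases t with
  | zero =>
    simp only [expWeights, Finset.sum_const, Finset.card_univ, Fintype.card_fin, nsmul_eq_mul]
    have : (N:ℝ) ≠ 0 := Nat.cast_ne_zero.mpr (by omega)
    field_simp
  | succ t =>
    have hZ : 0 < ∑ j, expWeights N η E ℓ t j * Real.exp (-η * ℓ t (E t j)) := by
      apply Finset.sum_pos
      · intro j _
        exact mul_pos (weights_pos N η E ℓ hN t j) (Real.exp_pos _)
      · haveI : Nonempty (Fin N) := Fin.pos_iff_nonempty.mp hN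
        exact Finset.univ_nonempty
    simp only [expWeights]
    rw [← Finset.sum_div, div_self hZ.ne']

end Weights

/-- second-order regret inequality for exponential weights. For
η ∈ (0, 1/2) and nonnegative losses bounded by 1/η, for every expert j,
Σ_t Σ_y p_t^y ℓ_t(y) - Σ_t ℓ_t(E_t^j) ≤ (ln N)/η + η Σ_t ℓ_t(1)
  + η Σ_t p_t^1 (1 - p_t^1) ℓ_t(0)² + η Σ_t p_t^1 ℓ_t(1)². -/
theorem exp_weights_second_order_regret (N T : ℕ) (hN : 1 ≤ N) (η : ℝ)
    (hη : η ∈ Set.Ioo (0 : ℝ) (1 / 2)) (E : ℕ → Fin N → Bool) (ℓ : ℕ → Bool → ℝ)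
    (hℓ : ∀ t, ∀ y : Bool, 0 ≤ ℓ t y ∧ ℓ t y ≤ 1 / η) (j : Fin N) :
    (∑ t ∈ Finset.range T,
        (probOne N η E ℓ t * ℓ t true + (1 - probOne N η E ℓ t) * ℓ t false)) -
      ∑ t ∈ Finset.range T, ℓ t (E t j)
    ≤ Real.log N / η + η * ∑ t ∈ Finset.range T, ℓ t true +
        η * ∑ t ∈ Finset.range T,
          probOne N η E ℓ t * (1 - probOne N η E ℓ t) * (ℓ t false) ^ 2 +
        η * ∑ t ∈ Finset.range T, probOne N η E ℓ t * (ℓ t true) ^ 2 := by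
  obtain ⟨hη0, hη2'⟩ := hη
  have hη2 : 2*η ≤ 1 := by linarith
  set q := expWeights N η E ℓ with hq
  set Z : ℕ → ℝ := fun t => ∑ i, q t i * Real.exp (-η * ℓ t (E t i)) with hZdef
  have hqpos := weights_pos N η E ℓ hN
  have hqsum := weights_sum_one N η E ℓ hN
  have hZpos : ∀ t, 0 < Z t := fun t =>
    Finset.sum_pos (fun i _ => mul_pos (hqpos t i) (Real.exp_pos _))
      (@Finset.univ_nonempty _ _ (Fin.pos_iff_nonempty.mp hN))
  set r : ℕ → ℝ := fun t => ∑ i, q t i * (if E t i then (1:ℝ) else 0) with hrdef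
  have hr0 : ∀ t, 0 ≤ r t := fun t =>
    Finset.sum_nonneg fun i _ => mul_nonneg (hqpos t i).le (by positivity)
  have hr1 : ∀ t, r t ≤ 1 := by
    intro t
    calc r t ≤ ∑ i, q t i := Finset.sum_le_sum fun i _ => by
          rcases E t i with _ | _ <;> simp <;> exact (hqpos t i).le
      _ = 1 := hqsum t
  have hpOne : ∀ t, probOne N η E ℓ t = (1-η)*(r t)+η := fun t => rfl
  have hℓ0 : ∀ t y, 0 ≤ ℓ t y := fun t y => (hℓ t y).1
  have hℓb : ∀ t y, η * ℓ t y ≤ 1 := by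
    intro t y
    have := (hℓ t y).2
    calc η * ℓ t y ≤ η * (1/η) := mul_le_mul_of_nonneg_left this hη0.le
      _ = 1 := by field_simp
  -- Z as mixture
  have hZmix : ∀ t, Z t = r t * Real.exp (-η * ℓ t true) + (1 - r t) * Real.exp (-η * ℓ t false) := by
    intro t
    have hterm : ∀ i, q t i * Real.exp (-η * ℓ t (E t i)) =
        q t i * (if E t i then (1:ℝ) else 0) * Real.exp (-η * ℓ t true)
        + q t i * (1 - (if E t i then (1:ℝ) else 0)) * Real.exp (-η * ℓ t false) := by
      intro i
      rcases h : E t i with _ | _ <;> simp [h]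
    calc Z t = ∑ i, (q t i * (if E t i then (1:ℝ) else 0) * Real.exp (-η * ℓ t true)
        + q t i * (1 - (if E t i then (1:ℝ) else 0)) * Real.exp (-η * ℓ t false)) := by
          rw [hZdef]; exact Finset.sum_congr rfl fun i _ => hterm i
      _ = (∑ i, q t i * (if E t i then (1:ℝ) else 0)) * Real.exp (-η * ℓ t true)
          + (∑ i, q t i * (1 - (if E t i then (1:ℝ) else 0))) * Real.exp (-η * ℓ t false) := by
          rw [Finset.sum_add_distrib, Finset.sum_mul, Finset.sum_mul]
      _ = r t * Real.exp (-η * ℓ t true) + (1 - r t) * Real.exp (-η * ℓ t false) := by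
          congr 1
          congr 1
          have : ∑ i, q t i * (1 - (if E t i then (1:ℝ) else 0))
              = (∑ i, q t i) - ∑ i, q t i * (if E t i then (1:ℝ) else 0) := by
            rw [← Finset.sum_sub_distrib]
            exact Finset.sum_congr rfl fun i _ => by ring
          rw [this, hqsum t]
  -- per-round bound on log Z
  have hlogZ : ∀ t, Real.log (Z t) ≤
      -η*(probOne N η E ℓ t * ℓ t true + (1 - probOne N η E ℓ t) * ℓ t false)
      + η^2*(ℓ t true + probOne N η E ℓ t * (1 - probOne N η E ℓ t) * (ℓ t false)^2
          + probOne N η E ℓ t * (ℓ t true)^2) := by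
    intro t
    rw [Real.log_le_iff_le_exp (hZpos t), hZmix t, hpOne t]
    exact roundBound η (r t) (ℓ t false) (ℓ t true) hη0 hη2 (hr0 t) (hr1 t)
      (hℓ0 t false) (hℓ0 t true) (hℓb t false) (hℓb t true)
  -- telescoping identity for log of weight of expert j
  have hlogq : ∀ T, Real.log (q T j) =
      -Real.log N - η * (∑ t ∈ Finset.range T, ℓ t (E t j))
      - ∑ t ∈ Finset.range T, Real.log (Z t) := by
    intro T
    induction T with
    | zero =>
      simp only [Finset.range_zero, Finset.sum_empty, mul_zero, sub_zero]
      show Real.log ((1:ℝ)/N) = -Real.log N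
      rw [one_div, Real.log_inv]
    | succ T ih =>
      have hstep : q (T+1) j = q T j * Real.exp (-η * ℓ T (E T j)) / Z T := rfl
      rw [hstep, Real.log_div (mul_pos (hqpos T j) (Real.exp_pos _)).ne' (hZpos T).ne',
        Real.log_mul (hqpos T j).ne' (Real.exp_pos _).ne', Real.log_exp, ih,
        Finset.sum_range_succ, Finset.sum_range_succ]
      ring
  -- q T j ≤ 1 hence log ≤ 0
  have hqle1 : q T j ≤ 1 := by
    rw [← hqsum T]
    exact Finset.single_le_sum (fun i _ => (hqpos T i).le) (Finset.mem_univ j)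
  have hlogle : Real.log (q T j) ≤ 0 := Real.log_nonpos (hqpos T j).le hqle1
  have hsum : -Real.log N - η * (∑ t ∈ Finset.range T, ℓ t (E t j))
      ≤ ∑ t ∈ Finset.range T, Real.log (Z t) := by
    have := hlogq T
    linarith [hlogle, this.symm.le, this.le]
  have hsum2 : ∑ t ∈ Finset.range T, Real.log (Z t) ≤
      -η * (∑ t ∈ Finset.range T,
        (probOne N η E ℓ t * ℓ t true + (1 - probOne N η E ℓ t) * ℓ t false))
      + η^2 * ((∑ t ∈ Finset.range T, ℓ t true)
        + (∑ t ∈ Finset.range T, probOne N η E ℓ t * (1 - probOne N η E ℓ t) * (ℓ t false)^2)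
        + (∑ t ∈ Finset.range T, probOne N η E ℓ t * (ℓ t true)^2)) := by
    calc ∑ t ∈ Finset.range T, Real.log (Z t)
        ≤ ∑ t ∈ Finset.range T,
          (-η*(probOne N η E ℓ t * ℓ t true + (1 - probOne N η E ℓ t) * ℓ t false)
          + η^2*(ℓ t true + probOne N η E ℓ t * (1 - probOne N η E ℓ t) * (ℓ t false)^2
              + probOne N η E ℓ t * (ℓ t true)^2)) :=
          Finset.sum_le_sum fun t _ => hlogZ t
      _ = _ := by
          rw [Finset.sum_add_distrib, ← Finset.mul_sum, ← Finset.mul_sum]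
          congr 1
          rw [Finset.sum_add_distrib, Finset.sum_add_distrib]
  -- combine
  set M := ∑ t ∈ Finset.range T,
    (probOne N η E ℓ t * ℓ t true + (1 - probOne N η E ℓ t) * ℓ t false) with hM
  set L := ∑ t ∈ Finset.range T, ℓ t (E t j) with hL
  set C1 := ∑ t ∈ Finset.range T, ℓ t true with hC1
  set C2 := ∑ t ∈ Finset.range T,
    probOne N η E ℓ t * (1 - probOne N η E ℓ t) * (ℓ t false)^2 with hC2
  set C3 := ∑ t ∈ Finset.range T, probOne N η E ℓ t * (ℓ t true)^2 with hC3
  have hfinal : η * (M - L - η*C1 - η*C2 - η*C3) ≤ Real.log N := by nlinarith [hsum, hsum2]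
  have hdiv : M - L - η*C1 - η*C2 - η*C3 ≤ Real.log N / η := (le_div_iff₀ hη0).mpr (by linarith [hfinal, mul_comm η (M - L - η*C1 - η*C2 - η*C3)])
  linarith
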